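/- arXiv:1507.08206 — 2 statements merged into one kernel-verified Lean document; each statement's English description precedes it below -/
import Mathlib

section
/- Let x = φ^ω(0) be the fixed point of φ(0)=001, φ(1)=1. Then inrc_x(n) < 2n for all n ≥ 1. -/
/-- The morphism φ(0)=001, φ(1)=1. -/
def pmor (b : ℕ) : List ℕ := if b = 0 then [0, 0, 1] else [1]

/-- The iterates φ^k(0). -/
def pword : ℕ → List ℕ
  | 0 => [0]
  | (k + 1) => (pword k).flatMap pmor

/-- The fixed point x = φ^ω(0). -/
def pfix (i : ℕ) : ℕ := (pword (i + 1)).getD i 0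

/-- The set of `m` such that the first `m` length-`n` factors of `x`
are pairwise distinct; `inrc x n` is its greatest element. -/
def inrcSet {α : Type*} (x : ℕ → α) (n : ℕ) : Set ℕ :=
  {m | ∀ i < m, ∀ j < m, (∀ d < n, x (i + d) = x (j + d)) → i = j}

/-!
`φ^(k+1)(0) = φ^k(0) φ^k(0) 1`, so `x` begins with the square `u u` of `u = φ^k(0)`, of length
`2^(k+1) - 1`. Taking `2^k ≤ n < 2^(k+1)`, the length-`n` factors of `x` at positions `0` and
`|u| < 2n` coincide.
-/

theorem le_of_mem_inrcSet_of_factor_eq_prefix {α : Type*} {x : ℕ → α} {n p m : ℕ} (hp : 0 < p)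
    (hfactor : ∀ d < n, x (p + d) = x d) (hm : m ∈ inrcSet x n) : m ≤ p := by
  by_contra! hpm
  have := hm 0 (by omega) p hpm fun d hd => by rw [zero_add, hfactor d hd]
  omega

theorem pword_succ (k : ℕ) : pword (k + 1) = pword k ++ pword k ++ [1] := by
  induction k with
  | zero => rfl
  | succ k ih =>
    change (pword (k + 1)).flatMap pmor = _
    conv_lhs => rw [ih]
    rw [List.flatMap_append, List.flatMap_append]
    rfl

theorem pword_length_add_one (k : ℕ) : (pword k).length + 1 = 2 ^ (k + 1) := by
  induction k with
  | zero => rfl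
  | succ k ih =>
    rw [pword_succ, List.length_append, List.length_append, pow_succ, ← ih]
    simp only [List.length_singleton]
    ring

theorem pword_prefix_of_le {a b : ℕ} (h : a ≤ b) : pword a <+: pword b := by
  induction b, h using Nat.le_induction with
  | base => exact List.prefix_refl _
  | succ b _ ih =>
    refine ih.trans ?_
    rw [pword_succ, List.append_assoc]
    exact List.prefix_append _ _

theorem pword_getD_of_le {a b i : ℕ} (h : a ≤ b) (hi : i < (pword a).length) :
    (pword b).getD i 0 = (pword a).getD i 0 := by
  obtain ⟨t, ht⟩ := pword_prefix_of_le h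
  rw [← ht, List.getD_append _ _ _ _ hi]

theorem pfix_eq_getD {k i : ℕ} (hi : i < (pword k).length) : pfix i = (pword k).getD i 0 := by
  have hi' : i < (pword (i + 1)).length := by
    have := pword_length_add_one (i + 1)
    have := Nat.lt_two_pow_self (n := i + 1)
    rw [pow_succ] at *
    omega
  rcases le_total k (i + 1) with hk | hk
  · exact pword_getD_of_le hk hi
  · exact (pword_getD_of_le hk hi').symm

theorem pfix_length_add {k d : ℕ} (hd : d < (pword k).length) :
    pfix ((pword k).length + d) = pfix d := by
  have hd' : (pword k).length + d < (pword (k + 1)).length := by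
    rw [pword_succ, List.length_append, List.length_append]
    omega
  rw [pfix_eq_getD hd', pfix_eq_getD hd, pword_succ, List.append_assoc,
    List.getD_append_right _ _ _ _ (Nat.le_add_right _ _), Nat.add_sub_cancel_left,
    List.getD_append _ _ _ _ hd]

/-- for x = φ^ω(0), inrc_x(n) < 2n for all n ≥ 1
(every element of the inrc set, in particular the maximum, is < 2n). -/
theorem inrc_pfix_lt (n : ℕ) (hn : 1 ≤ n) :
    ∀ m ∈ inrcSet pfix n, m < 2 * n := by
  intro m hm
  set k := Nat.log 2 n
  have hlo : 2 ^ k ≤ n := Nat.pow_log_le_self 2 (by omega)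
  have hhi : n < 2 ^ (k + 1) := Nat.lt_pow_succ_log_self (by norm_num) n
  have hlen := pword_length_add_one k
  have hm_le : m ≤ (pword k).length :=
    le_of_mem_inrcSet_of_factor_eq_prefix (by omega) (fun d hd => pfix_length_add (by omega)) hm
  rw [pow_succ] at hlen
  omega
end

section
/- The ruler sequence x = 0102010301020104⋯ (limit of the Zimin words Z_{n+1} = Z_n n Z_n over the alphabet ℕ) satisfies n < inrc_x(n) ≤ 2n for all n ≥ 1. -/
/-!
Write `p = 2 ^ k * q` with `q` odd. Any `p` consecutive positions contain one, `u`, with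
`2 ^ k ∣ u + 1`; writing `u + 1 = 2 ^ k * r`, the values `ν₂ r` and `ν₂ (r + q)` differ because
exactly one of `r`, `r + q` is odd, so `ruler u ≠ ruler (u + p)`. Hence two length-`n` factors
at distance `p ≤ n` differ. Conversely, if `n < 2 ^ k ≤ 2 * n`, then adding `2 ^ k` does not change
the valuation of any `u + 1 < 2 ^ k`, so the factors at `0` and `2 ^ k` coincide.
-/

/-- The ruler sequence (limit of the Zimin words): x_i = ν₂(i+1). -/
def ruler (i : ℕ) : ℕ := padicValNat 2 (i + 1)

theorem padicValNat_add_of_lt {p : ℕ} [Fact p.Prime] {a b : ℕ} (ha : a ≠ 0) (hb : b ≠ 0)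
    (h : padicValNat p a < padicValNat p b) : padicValNat p (a + b) = padicValNat p a := by
  have key := padicValRat.add_eq_of_lt (p := p) (q := a) (r := b) (by norm_cast; omega)
    (by exact_mod_cast ha) (by exact_mod_cast hb)
    (by simpa only [padicValRat.of_nat, Nat.cast_lt] using h)
  rw [← Nat.cast_add, padicValRat.of_nat, padicValRat.of_nat] at key
  exact_mod_cast key

theorem padicValNat_two_add_odd_ne {r q : ℕ} (hr : r ≠ 0) (hq : Odd q) :
    padicValNat 2 (r + q) ≠ padicValNat 2 r := by
  rcases Nat.even_or_odd r with hr2 | hr2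
  · have h1 : padicValNat 2 (r + q) = 0 :=
      padicValNat.eq_zero_of_not_dvd (hr2.add_odd hq).not_two_dvd_nat
    have h2 : 1 ≤ padicValNat 2 r := one_le_padicValNat_of_dvd hr hr2.two_dvd
    omega
  · have h1 : padicValNat 2 r = 0 := padicValNat.eq_zero_of_not_dvd hr2.not_two_dvd_nat
    have h2 : 1 ≤ padicValNat 2 (r + q) :=
      one_le_padicValNat_of_dvd (by omega) (hr2.add_odd hq).two_dvd
    omega

theorem ruler_add_two_pow {k u : ℕ} (hu : u + 1 < 2 ^ k) : ruler (2 ^ k + u) = ruler u := by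
  have hk : padicValNat 2 (u + 1) < padicValNat 2 (2 ^ k) := by
    rw [padicValNat.prime_pow]
    exact (Nat.pow_lt_pow_iff_right (by norm_num)).mp
      ((Nat.le_of_dvd (by omega) pow_padicValNat_dvd).trans_lt hu)
  rw [ruler, ruler, ← padicValNat_add_of_lt (by omega) (by positivity) hk]
  ring_nf

theorem ruler_exists_ne_add (i : ℕ) {p : ℕ} (hp : p ≠ 0) :
    ∃ u, i ≤ u ∧ u < i + p ∧ ruler u ≠ ruler (u + p) := by
  obtain ⟨k, q, hq, rfl⟩ := Nat.exists_eq_two_pow_mul_odd hp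
  have hk : 2 ^ k ≠ 0 := by positivity
  have hkq : 2 ^ k ≤ 2 ^ k * q := Nat.le_mul_of_pos_right _ hq.pos
  obtain ⟨r, hr0, hir, hri⟩ : ∃ r ≠ 0, i < 2 ^ k * r ∧ 2 ^ k * r ≤ i + 2 ^ k :=
    ⟨i / 2 ^ k + 1, Nat.succ_ne_zero _, Nat.lt_mul_div_succ i (by positivity), by
      rw [mul_add, mul_one]; exact Nat.add_le_add_right (Nat.mul_div_le i _) _⟩
  refine ⟨2 ^ k * r - 1, by omega, by omega, fun h => ?_⟩
  rw [ruler, ruler, Nat.sub_add_cancel (by omega),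
    show 2 ^ k * r - 1 + 2 ^ k * q + 1 = 2 ^ k * r + 2 ^ k * q by omega, ← mul_add,
    padicValNat.mul hk hr0, padicValNat.mul hk (by omega)] at h
  exact padicValNat_two_add_odd_ne hr0 hq (by omega)

theorem ruler_exists_ne_of_lt {i j n : ℕ} (hij : i < j) (hjn : j ≤ i + n) :
    ∃ d < n, ruler (i + d) ≠ ruler (j + d) := by
  obtain ⟨u, hiu, huj, hne⟩ := ruler_exists_ne_add i (p := j - i) (by omega)
  refine ⟨u - i, by omega, ?_⟩
  rwa [Nat.add_sub_cancel' hiu, show j + (u - i) = u + (j - i) by omega]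

section inrcSet

variable {α : Type*} {x : ℕ → α} {n m : ℕ}

theorem mem_inrcSet_of_lt (h : ∀ i j, i < j → j < m → ∃ d < n, x (i + d) ≠ x (j + d)) :
    m ∈ inrcSet x n := by
  intro i hi j hj hij
  by_contra hne
  rcases Nat.lt_or_gt_of_ne hne with hlt | hlt
  · obtain ⟨d, hd, hdiff⟩ := h i j hlt hj
    exact hdiff (hij d hd)
  · obtain ⟨d, hd, hdiff⟩ := h j i hlt hi
    exact hdiff (hij d hd).symm

theorem le_of_mem_inrcSet (hm : m ∈ inrcSet x n) {i j : ℕ} (hij : i < j)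
    (h : ∀ d < n, x (i + d) = x (j + d)) : m ≤ j := by
  by_contra! hjm
  exact hij.ne (hm i (hij.trans hjm) j hjm h)

end inrcSet

/-- the ruler sequence satisfies n < inrc_x(n) ≤ 2n for all
n ≥ 1: the first n+1 length-n factors are pairwise distinct, and every
element of the inrc set (in particular the maximum) is ≤ 2n. -/
theorem inrc_ruler (n : ℕ) (hn : 1 ≤ n) :
    n + 1 ∈ inrcSet ruler n ∧ ∀ m ∈ inrcSet ruler n, m ≤ 2 * n := by
  refine ⟨mem_inrcSet_of_lt fun i j hij hj => ruler_exists_ne_of_lt hij (by omega), fun m hm => ?_⟩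
  obtain ⟨k, hnk, hkn⟩ : ∃ k, n < 2 ^ k ∧ 2 ^ k ≤ 2 * n :=
    ⟨Nat.log 2 n + 1, Nat.lt_pow_succ_log_self (by norm_num) n,
      by rw [pow_succ, mul_comm]; exact Nat.mul_le_mul_left 2 (Nat.pow_log_le_self 2 (by omega))⟩
  calc m ≤ 2 ^ k :=
        le_of_mem_inrcSet hm (i := 0) (by positivity) fun d hd => by
          rw [zero_add, ruler_add_two_pow (by omega)]
    _ ≤ 2 * n := hkn
end
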